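/- Let λ ∈ ℝ, Σ_λ = {x ∈ ℝ^n : x₁ < λ}, and let U : ℝ^n → ℝ be antisymmetric with respect to the reflection x ↦ x^λ = (2λ - x₁, x'), i.e. U(x^λ) = -U(x) for all x. Suppose U ≥ 0 on Σ_λ, U is integrable against the kernel y ↦ |x⁰ - y|^{-n} away from x⁰, and for some x⁰ ∈ Σ_λ one has ∫_{ℝ^n} ( -U(y) / |x⁰ - y|^n ) dy ≥ 0. Then U = 0 almost everywhere on ℝ^n. -/

import Mathlib

/-!
Pair each point `y` of the half-space `y₀ < λ` with its mirror image `y^λ`. By antisymmetry the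
two contributions to `∫ U(y) |x⁰ - y|⁻ⁿ dy` combine to `U(y) (|x⁰ - y|⁻ⁿ - |x⁰ - y^λ|⁻ⁿ)`, and
`|x⁰ - y^λ|² = |x⁰ - y|² + 4 (λ - x⁰₀)(λ - y₀)` makes the weight strictly positive. A nonnegative
function integrated against a positive weight with nonpositive integral vanishes a.e. on the
half-space, and antisymmetry carries this to the other half; the hyperplane itself is null.
-/

open MeasureTheory

section Involution

variable {α E : Type*} [MeasurableSpace α] {μ : Measure α} {R : α ≃ᵐ α} {S : Set α}

theorem integral_eq_setIntegral_add_comp [NormedAddCommGroup E] [NormedSpace ℝ E]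
    (hR : MeasurePreserving R μ μ) (hS : MeasurableSet S) (hRS : R ⁻¹' Sᶜ =ᵐ[μ] S)
    {g : α → E} (hg : Integrable g μ) :
    ∫ x, g x ∂μ = ∫ x in S, (g x + g (R x)) ∂μ := by
  have hgR : Integrable (fun x => g (R x)) μ := hR.integrable_comp_emb R.measurableEmbedding |>.2 hg
  calc ∫ x, g x ∂μ = ∫ x in S, g x ∂μ + ∫ x in Sᶜ, g x ∂μ := (integral_add_compl hS hg).symm
    _ = ∫ x in S, g x ∂μ + ∫ x in R ⁻¹' Sᶜ, g (R x) ∂μ := by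
      rw [hR.setIntegral_preimage_emb R.measurableEmbedding]
    _ = ∫ x in S, (g x + g (R x)) ∂μ := by
      rw [setIntegral_congr_set hRS, integral_add hg.integrableOn hgR.integrableOn]

theorem ae_eq_zero_of_comp_eq_neg_of_ae_restrict {U : α → ℝ}
    (hR : MeasurePreserving R μ μ) (hS : MeasurableSet S) (hRS : R ⁻¹' Sᶜ =ᵐ[μ] S)
    (hanti : ∀ x, U (R x) = -U x) (hU : U =ᵐ[μ.restrict S] 0) :
    U =ᵐ[μ] 0 := by
  have hUc : U =ᵐ[μ.restrict Sᶜ] 0 := by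
    rw [← (hR.restrict_preimage_emb R.measurableEmbedding Sᶜ).map_eq,
      Measure.restrict_congr_set hRS, Filter.EventuallyEq,
      R.measurableEmbedding.ae_map_iff]
    filter_upwards [hU] with x hx
    simpa [hanti] using hx
  rw [← Measure.restrict_add_restrict_compl (μ := μ) hS]
  exact ae_add_measure_iff.2 ⟨hU, hUc⟩

end Involution

theorem ae_eq_zero_of_integral_mul_nonpos {α : Type*} [MeasurableSpace α] {μ : Measure α}
    {U w : α → ℝ} (hU : 0 ≤ᵐ[μ] U) (hw : ∀ᵐ x ∂μ, 0 < w x)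
    (hint : Integrable (fun x => U x * w x) μ) (h : ∫ x, U x * w x ∂μ ≤ 0) :
    U =ᵐ[μ] 0 := by
  have hUw : 0 ≤ᵐ[μ] fun x => U x * w x := by
    filter_upwards [hU, hw] with x hUx hwx
    exact mul_nonneg hUx hwx.le
  have hzero := (integral_eq_zero_iff_of_nonneg_ae hUw hint).1
    (le_antisymm h (integral_nonneg_of_ae hUw))
  filter_upwards [hzero, hw] with x hx hwx
  exact (mul_eq_zero.1 hx).resolve_right hwx.ne'

theorem EuclideanSpace.ae_apply_ne {ι : Type*} [Fintype ι] (k : ι) (c : ℝ) :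
    ∀ᵐ x : EuclideanSpace ℝ ι, x k ≠ c :=
  (PiLp.volume_preserving_ofLp ι).quasiMeasurePreserving.ae
    (by rw [volume_pi]; exact Measure.ae_eval_ne _ k c)

section CoordReflection

variable {ι : Type*} [DecidableEq ι] (k : ι) (lam : ℝ)

noncomputable def coordReflection (x : EuclideanSpace ℝ ι) : EuclideanSpace ℝ ι :=
  WithLp.toLp 2 (fun i => if i = k then 2 * lam - x k else x i)

@[simp]
theorem coordReflection_apply_self (x : EuclideanSpace ℝ ι) :
    coordReflection k lam x k = 2 * lam - x k := by
  simp [coordReflection]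

theorem coordReflection_apply_of_ne (x : EuclideanSpace ℝ ι) {i : ι} (hi : i ≠ k) :
    coordReflection k lam x i = x i := by
  simp [coordReflection, hi]

theorem coordReflection_involutive : Function.Involutive (coordReflection k lam) := by
  intro x
  ext i
  by_cases hi : i = k
  · subst hi; simp
  · simp [coordReflection_apply_of_ne k lam _ hi]

variable [Fintype ι]

theorem measurePreserving_coordReflection :
    MeasurePreserving (coordReflection k lam) := by
  have hcoord : ∀ i : ι, MeasurePreserving (fun t : ℝ => if i = k then 2 * lam - t else t) := by
    intro i
    split_ifs
    · exact Measure.measurePreserving_sub_left volume (2 * lam)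
    · exact MeasurePreserving.id volume
  convert (PiLp.volume_preserving_toLp ι).comp
    ((volume_preserving_pi hcoord).comp (PiLp.volume_preserving_ofLp ι)) using 1
  ext x i
  by_cases hi : i = k
  · subst hi; simp
  · simp [coordReflection_apply_of_ne k lam _ hi, hi]

noncomputable def coordReflectionEquiv : EuclideanSpace ℝ ι ≃ᵐ EuclideanSpace ℝ ι :=
  .ofInvolutive _ (coordReflection_involutive k lam)
    (measurePreserving_coordReflection k lam).measurable

theorem coordReflection_preimage_compl_ae_eq :
    coordReflection k lam ⁻¹' {x | x k < lam}ᶜ =ᵐ[volume] {x | x k < lam} := by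
  rw [Filter.eventuallyEq_set]
  filter_upwards [EuclideanSpace.ae_apply_ne k lam] with x hx
  simp only [Set.mem_preimage, Set.mem_compl_iff, Set.mem_ofPred_eq, coordReflection_apply_self]
  constructor
  · intro h; exact lt_of_le_of_ne (by linarith) hx
  · intro h; linarith

theorem norm_sub_coordReflection_sq (x y : EuclideanSpace ℝ ι) :
    ‖x - coordReflection k lam y‖ ^ 2 = ‖x - y‖ ^ 2 + 4 * (lam - x k) * (lam - y k) := by
  simp only [EuclideanSpace.norm_sq_eq, PiLp.sub_apply]
  rw [← Finset.add_sum_erase _ _ (Finset.mem_univ k),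
    ← Finset.add_sum_erase _ _ (Finset.mem_univ k),
    Finset.sum_congr rfl fun i hi => by
      rw [coordReflection_apply_of_ne k lam y (Finset.ne_of_mem_erase hi)]]
  simp only [coordReflection_apply_self, Real.norm_eq_abs, sq_abs]
  ring

theorem norm_sub_lt_norm_sub_coordReflection {x y : EuclideanSpace ℝ ι}
    (hx : x k < lam) (hy : y k < lam) :
    ‖x - y‖ < ‖x - coordReflection k lam y‖ := by
  refine lt_of_pow_lt_pow_left₀ 2 (norm_nonneg _) ?_
  rw [norm_sub_coordReflection_sq]
  nlinarith [mul_pos (sub_pos.2 hx) (sub_pos.2 hy)]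

theorem inv_rpow_norm_sub_coordReflection_lt {x y : EuclideanSpace ℝ ι} (hxy : x ≠ y)
    (hx : x k < lam) (hy : y k < lam) {p : ℝ} (hp : 0 < p) :
    (‖x - coordReflection k lam y‖ ^ p)⁻¹ < (‖x - y‖ ^ p)⁻¹ := by
  have hd : 0 < ‖x - y‖ := norm_sub_pos_iff.2 hxy
  exact inv_strictAnti₀ (by positivity)
    (Real.rpow_lt_rpow hd.le (norm_sub_lt_norm_sub_coordReflection k lam hx hy) hp)

end CoordReflection

theorem antisymmetric_nonneg_integral_zero (n : ℕ) [NeZero n] (lam : ℝ)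
    (U : EuclideanSpace ℝ (Fin n) → ℝ)
    (hanti : ∀ x : EuclideanSpace ℝ (Fin n),
      U (WithLp.toLp 2 (fun i => if i = 0 then 2 * lam - x 0 else x i)) = -U x)
    (hpos : ∀ x : EuclideanSpace ℝ (Fin n), x 0 < lam → 0 ≤ U x)
    (x0 : EuclideanSpace ℝ (Fin n)) (hx0 : x0 0 < lam)
    (hint : MeasureTheory.Integrable (fun y => U y / ‖x0 - y‖ ^ (n : ℝ)))
    (hge : (∫ y, -U y / ‖x0 - y‖ ^ (n : ℝ)) ≥ 0) :
    U =ᵐ[volume] 0 := by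
  set R := coordReflectionEquiv (0 : Fin n) lam
  set S : Set (EuclideanSpace ℝ (Fin n)) := {x | x 0 < lam}
  have hR : MeasurePreserving R := measurePreserving_coordReflection 0 lam
  have hS : MeasurableSet S := measurableSet_lt (by fun_prop) measurable_const
  have hRS : R ⁻¹' Sᶜ =ᵐ[volume] S := coordReflection_preimage_compl_ae_eq 0 lam
  have hanti : ∀ y, U (R y) = -U y := hanti
  refine ae_eq_zero_of_comp_eq_neg_of_ae_restrict hR hS hRS hanti ?_
  set w := fun y => (‖x0 - y‖ ^ (n : ℝ))⁻¹ - (‖x0 - R y‖ ^ (n : ℝ))⁻¹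
  have hpair : ∀ y, U y / ‖x0 - y‖ ^ (n : ℝ) + U (R y) / ‖x0 - R y‖ ^ (n : ℝ) = U y * w y := by
    intro y; rw [hanti y]; ring
  have hw : ∀ᵐ y ∂volume.restrict S, 0 < w y := by
    filter_upwards [ae_restrict_mem hS, ae_restrict_of_ae (EuclideanSpace.ae_apply_ne 0 (x0 0))]
      with y hyS hy
    exact sub_pos.2 <| inv_rpow_norm_sub_coordReflection_lt 0 lam (fun h => hy (by rw [h])) hx0
      hyS (by exact_mod_cast Nat.pos_of_neZero n)
  have hint' : IntegrableOn (fun y => U y * w y) S :=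
    (hint.add ((hR.integrable_comp_emb R.measurableEmbedding).2 hint)).integrableOn.congr_fun
      (fun y _ => hpair y) hS
  have hsum : ∫ y in S, U y * w y ≤ 0 := by
    rw [← setIntegral_congr_fun hS (fun y _ => hpair y),
      ← integral_eq_setIntegral_add_comp hR hS hRS hint]
    simp only [neg_div, integral_neg] at hge
    linarith
  exact ae_eq_zero_of_integral_mul_nonpos (ae_restrict_of_forall_mem hS hpos) hw hint' hsum
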